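/- arXiv:2505.06209 — 4 statements merged into one kernel-verified Lean document; each statement's English description precedes it below -/
import Mathlib

section
/- Let n_1, n_2 be currents on the one-dimensional lattice {0,…,N} extended by a ghost vertex g (so each n_i assigns a natural number n_i^Λ(x) to each nearest-neighbor edge (x,x+1) and n_i^g(x) to each ghost edge (x,g)). The event {∂n_1 = ∅, ∂n_2 = {0,N}, and 0 is not connected to g by the edges where n_1 + n_2 is nonzero} holds if and only if: (i) n_1^Λ(x) is even for all x ∈ {0,…,N-1}; (ii) n_2^Λ(x) is odd for all x ∈ {0,…,N-1}; and (iii) n_1^g and n_2^g are identically zero. -/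
open Finset

/-- Total number of arrivals of the lattice current `nL` at the vertex `v` of `{0, …, N}`
(edge `x` joins vertices `x` and `x+1`). -/
def touch (N : ℕ) (nL : Fin N → ℕ) (v : Fin (N + 1)) : ℕ :=
  ∑ x : Fin N, if v = x.castSucc ∨ v = x.succ then nL x else 0

/-- The sum of the ghost current over the vertices to the left of the edge `x`
(i.e. over vertices `y ≤ x`). -/
def lsum (N : ℕ) (ng : Fin (N + 1) → ℕ) (x : Fin N) : ℕ :=
  ∑ y : Fin (N + 1), if (y : ℕ) ≤ (x : ℕ) then ng y else 0

/-- The sum of the ghost current over the vertices to the right of the edge `x`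
(i.e. over vertices `y ≥ x + 1`). -/
def rsum (N : ℕ) (ng : Fin (N + 1) → ℕ) (x : Fin N) : ℕ :=
  ∑ y : Fin (N + 1), if (x : ℕ) + 1 ≤ (y : ℕ) then ng y else 0

/-- The Poisson probability mass function with rate `r`. -/
noncomputable def poisPMF (r : ℝ) (k : ℕ) : ℝ := Real.exp (-r) * r ^ k / (Nat.factorial k)

/-- Adjacency on the lattice `{0,…,N}` extended by a ghost vertex (`none`):
two vertices are adjacent if some edge joining them carries a nonzero current. -/
def curAdj (N : ℕ) (mL : Fin N → ℕ) (mg : Fin (N + 1) → ℕ) :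
    Option (Fin (N + 1)) → Option (Fin (N + 1)) → Prop
  | some u, some v => ∃ x : Fin N, mL x ≠ 0 ∧
      ((u = x.castSucc ∧ v = x.succ) ∨ (u = x.succ ∧ v = x.castSucc))
  | some u, none => mg u ≠ 0
  | none, some v => mg v ≠ 0
  | none, none => False

/-! Walk along the lattice from `0`. A vertex joined to `0` by edges carrying current has no
ghost current (otherwise `0` would be joined to `g`), so its boundary condition reads off the
parity of the next lattice edge from that of the previous one: `n₁` stays even, and `n₂` stays
odd because the vertex lies in the interior. Since `n₂` is odd, hence nonzero, on that edge, the
next vertex is joined to `0` as well. -/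

open Relation

section Touch

variable {N : ℕ} (nL : Fin N → ℕ)

lemma touch_eq_add (v : Fin (N + 1)) :
    touch N nL v =
      (∑ x, if v = x.castSucc then nL x else 0) + ∑ x, if v = x.succ then nL x else 0 := by
  rw [touch, ← sum_add_distrib]
  refine sum_congr rfl fun x _ => ?_
  by_cases h : v = x.castSucc
  · simp [h, Fin.castSucc_lt_succ.ne]
  · simp [h]

lemma even_touch (h : ∀ x, Even (nL x)) (v : Fin (N + 1)) : Even (touch N nL v) :=
  Finset.even_sum _ fun x _ => by split_ifs; exacts [h x, .zero]

end Touch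

section TouchSucc

variable {M : ℕ} (nL : Fin (M + 1) → ℕ)

@[simp]
lemma touch_zero : touch (M + 1) nL 0 = nL 0 := by
  simp [touch_eq_add, eq_comm (a := (0 : Fin (M + 2))), Fin.succ_ne_zero]

@[simp]
lemma touch_last : touch (M + 1) nL (Fin.last (M + 1)) = nL (Fin.last M) := by
  simp [touch_eq_add, eq_comm (a := Fin.last (M + 1))]

@[simp]
lemma touch_castSucc_succ (i : Fin M) :
    touch (M + 1) nL i.castSucc.succ = nL i.castSucc + nL i.succ := by
  have hleft (x : Fin (M + 1)) : i.castSucc.succ = x.castSucc ↔ x = i.succ := by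
    rw [Fin.succ_castSucc, Fin.castSucc_inj, eq_comm]
  simp [touch_eq_add, hleft, add_comm]

lemma odd_touch_iff_of_odd (h : ∀ x, Odd (nL x)) (v : Fin (M + 2)) :
    Odd (touch (M + 1) nL v) ↔ v = 0 ∨ v = Fin.last (M + 1) := by
  induction v using Fin.lastCases with
  | last => simpa using h _
  | cast w =>
    induction w using Fin.cases with
    | zero => simpa using h 0
    | succ i =>
      simp [Nat.odd_add, h, Fin.castSucc_ne_last]

end TouchSucc

section CurAdj

variable {N : ℕ} {mL : Fin N → ℕ} {mg : Fin (N + 1) → ℕ}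

lemma curAdj_castSucc_succ {x : Fin N} (hx : mL x ≠ 0) :
    curAdj N mL mg (some x.castSucc) (some x.succ) :=
  ⟨x, hx, .inl ⟨rfl, rfl⟩⟩

lemma ghost_eq_zero_of_reflTransGen {a : Option (Fin (N + 1))} {u : Fin (N + 1)}
    (hu : ReflTransGen (curAdj N mL mg) a (some u))
    (hg : ¬ ReflTransGen (curAdj N mL mg) a none) : mg u = 0 :=
  by_contra fun h => hg (hu.tail h)

lemma not_reflTransGen_curAdj_zero_none (u : Fin (N + 1)) :
    ¬ ReflTransGen (curAdj N mL 0) (some u) none := by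
  intro h
  rcases h.cases_tail with h | ⟨_ | v, -, hv⟩
  · exact Option.some_ne_none u h.symm
  · exact hv
  · exact hv rfl

end CurAdj

lemma edge_parity_of_boundary {M : ℕ} (n1L n2L : Fin (M + 1) → ℕ) (n1g n2g : Fin (M + 2) → ℕ)
    (h1 : ∀ v, Even (touch (M + 1) n1L v + n1g v))
    (h2 : ∀ v, Odd (touch (M + 1) n2L v + n2g v) ↔ v = 0 ∨ v = Fin.last (M + 1))
    (hg : ¬ ReflTransGen (curAdj (M + 1) (fun x => n1L x + n2L x) (fun v => n1g v + n2g v))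
      (some 0) none)
    (x : Fin (M + 1)) :
    Even (n1L x) ∧ Odd (n2L x) ∧
      ReflTransGen (curAdj (M + 1) (fun x => n1L x + n2L x) (fun v => n1g v + n2g v))
        (some 0) (some x.succ) := by
  have ghost {v} (hv : ReflTransGen _ (some 0) (some v)) : n1g v = 0 ∧ n2g v = 0 :=
    Nat.add_eq_zero_iff.mp (ghost_eq_zero_of_reflTransGen hv hg)
  induction x using Fin.induction with
  | zero =>
    obtain ⟨h1g, h2g⟩ := ghost .refl
    have hn1 := h1 0
    have hn2 := (h2 0).2 (.inl rfl)
    simp only [touch_zero, h1g, h2g, add_zero] at hn1 hn2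
    exact ⟨hn1, hn2, .single (curAdj_castSucc_succ (x := 0) (Nat.add_pos_right _ hn2.pos).ne')⟩
  | succ i ih =>
    obtain ⟨ev, od, reach⟩ := ih
    obtain ⟨h1g, h2g⟩ := ghost reach
    have hn1 := h1 i.castSucc.succ
    have hn2 := mt (h2 i.castSucc.succ).1 (by simp [Fin.castSucc_ne_last])
    simp only [touch_castSucc_succ, h1g, h2g, add_zero] at hn1 hn2
    have od' : Odd (n2L i.succ) := by simpa [Nat.odd_add, od] using hn2
    refine ⟨(Nat.even_add.mp hn1).mp ev, od', ?_⟩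
    rw [Fin.succ_castSucc] at reach
    exact reach.tail (curAdj_castSucc_succ (Nat.add_pos_right _ od'.pos).ne')

theorem numerator_event_characterization (N : ℕ) (hN : 0 < N)
    (n1L n2L : Fin N → ℕ) (n1g n2g : Fin (N + 1) → ℕ) :
    ((∀ v : Fin (N + 1), Even (touch N n1L v + n1g v)) ∧ Even (∑ x, n1g x) ∧
      (∀ v : Fin (N + 1), (Odd (touch N n2L v + n2g v) ↔ (v = 0 ∨ v = Fin.last N))) ∧
      Even (∑ x, n2g x) ∧
      ¬ Relation.ReflTransGen
          (curAdj N (fun x => n1L x + n2L x) (fun x => n1g x + n2g x))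
          (some 0) none) ↔
    ((∀ x : Fin N, Even (n1L x)) ∧ (∀ x : Fin N, Odd (n2L x)) ∧
      n1g = 0 ∧ n2g = 0) := by
  obtain ⟨M, rfl⟩ := Nat.exists_eq_add_one_of_ne_zero hN.ne'
  constructor
  · rintro ⟨h1, -, h2, -, hg⟩
    have edges := edge_parity_of_boundary n1L n2L n1g n2g h1 h2 hg
    have ghost (v : Fin (M + 2)) : n1g v = 0 ∧ n2g v = 0 := by
      refine Nat.add_eq_zero_iff.mp (ghost_eq_zero_of_reflTransGen ?_ hg)
      induction v using Fin.cases with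
      | zero => exact .refl
      | succ x => exact (edges x).2.2
    exact ⟨fun x => (edges x).1, fun x => (edges x).2.1,
      funext fun v => (ghost v).1, funext fun v => (ghost v).2⟩
  · rintro ⟨h1, h2, rfl, rfl⟩
    refine ⟨fun v => ?_, by simp, fun v => ?_, by simp, not_reflTransGen_curAdj_zero_none 0⟩
    · simpa using even_touch n1L h1 v
    · simpa using odd_touch_iff_of_odd n2L h2 v
end

section
/- With P the random current measure on {0,…,N} (edge variables Poisson with rates J_x > 0, ghost variables Poisson with rates h_x ≥ 0, all independent), one has P(∂n^Λ = ∂n^g | Σ_{x=0}^N n^g(x) even) / P(n^Λ(x) even for all x) ≥ ∏_{x=0}^{N-1} (1 + tanh(J_x))/2. -/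
open Finset

/-- The product Poisson weight of a pair of a lattice current and a ghost current. -/
noncomputable def rcWeight (N : ℕ) (J : Fin N → ℝ) (h : Fin (N + 1) → ℝ)
    (p : (Fin N → ℕ) × (Fin (N + 1) → ℕ)) : ℝ :=
  (∏ x : Fin N, poisPMF (J x) (p.1 x)) * ∏ x : Fin (N + 1), poisPMF (h x) (p.2 x)

/-! Given the ghost current, the event `∂n^Λ = ∂n^g` with `∑ n^g` even says exactly that
`n^Λ(x) ≡ ∑_{y ≤ x} n^g(y) (mod 2)` on every edge `x`: on a path a current is determined mod 2 by
its boundary, and a boundary has even total. The edges are then independent, with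
`P(n^Λ(x) ≡ s) = (1 + (-1)^s e^{-2J_x}) / 2`. Expanding the product over the edges into a sum over
subsets `t`, the term of `t` is `∏_{x ∈ t} e^{-2J_x}` times the mean of
`1{∑ n^g even} ∏_y (cutSign t y)^{n^g(y)}`, an average of two Poisson generating
functions and hence positive. The term `t = ∅` alone gives the numerator `≥ 2^{-N} P(∑ n^g even)`,
and `P(n^Λ even) ∏ (1 + tanh J_x)/2 = 2^{-N}` since `(1 + tanh J)(1 + e^{-2J}) = 2`. -/

open Real

/-- In `ℝ` unconditional summability is absolute, so the product family is summable. -/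
theorem HasSum.mul_real {α β : Type*} {f : α → ℝ} {g : β → ℝ} {a b : ℝ} (hf : HasSum f a)
    (hg : HasSum g b) : HasSum (fun p : α × β => f p.1 * g p.2) (a * b) :=
  hf.mul hg (summable_mul_of_summable_norm (summable_norm_iff.2 hf.summable)
    (summable_norm_iff.2 hg.summable))

theorem hasSum_prod_pi {ι κ : Type*} [hι : Fintype ι] {f : ι → κ → ℝ} {a : ι → ℝ}
    (hf : ∀ i, HasSum (f i) (a i)) : HasSum (fun g : ι → κ => ∏ i, f i (g i)) (∏ i, a i) := by
  suffices ∀ (f : ι → κ → ℝ) (a : ι → ℝ), (∀ i, HasSum (f i) (a i)) →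
      HasSum (fun g : ι → κ => ∏ i, f i (g i)) (∏ i, a i) from this f a hf
  clear f a hf
  refine Fintype.induction_empty_option ?_ ?_ ?_ ι (h_fintype := hι)
  · intro α β _ e ih f a hf
    let := Fintype.ofEquiv β e.symm
    let E : (β → κ) ≃ (α → κ) := (e.arrowCongr (Equiv.refl κ)).symm
    have hE : ∀ g : β → κ, ∏ i, f (e i) (E g i) = ∏ j, f j (g j) := fun g =>
      e.prod_comp fun j => f j (g j)
    simpa only [Function.comp_def, hE, e.prod_comp a] using
      E.hasSum_iff.2 (ih _ _ fun i => hf (e i))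
  · intro f a _
    simp
  · intro α _ ih f a hf
    rw [Fintype.prod_option]
    refine ((Equiv.piOptionEquivProd (β := fun _ => κ)).hasSum_iff.2
      ((hf none).mul_real (ih _ _ fun i => hf (some i)))).congr_fun fun g => ?_
    exact Fintype.prod_option _

theorem hasSum_poisPMF_mul_pow (r z : ℝ) :
    HasSum (fun k => poisPMF r k * z ^ k) (exp (r * (z - 1))) := by
  have h := (NormedSpace.expSeries_div_hasSum_exp (r * z)).mul_left (exp (-r))
  rw [← exp_eq_exp_ℝ, ← exp_add, neg_add_eq_sub, ← mul_sub_one] at h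
  exact h.congr_fun fun k => by simp only [poisPMF, mul_pow]; ring

theorem hasSum_ite_even_poisPMF (r : ℝ) :
    HasSum (fun k => if Even k then poisPMF r k else 0) ((1 + exp (-2 * r)) / 2) := by
  have h := ((hasSum_poisPMF_mul_pow r 1).add (hasSum_poisPMF_mul_pow r (-1))).div_const 2
  rw [sub_self, mul_zero, exp_zero, show r * (-1 - 1) = -2 * r by ring] at h
  refine h.congr_fun fun k => ?_
  rcases Nat.even_or_odd k with hk | hk
  · simp [hk, hk.neg_one_pow]
  · simp [Nat.not_even_iff_odd.2 hk, hk.neg_one_pow]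

section PoissonWeight

variable {ι : Type*} [Fintype ι]

noncomputable def poisWeight (r : ι → ℝ) (g : ι → ℕ) : ℝ := ∏ i, poisPMF (r i) (g i)

theorem hasSum_poisWeight_mul_prod_pow (r z : ι → ℝ) :
    HasSum (fun g : ι → ℕ => poisWeight r g * ∏ i, z i ^ g i) (∏ i, exp (r i * (z i - 1))) := by
  simpa only [poisWeight, ← prod_mul_distrib] using
    hasSum_prod_pi fun i => hasSum_poisPMF_mul_pow (r i) (z i)

theorem hasSum_poisWeight (r : ι → ℝ) : HasSum (poisWeight r) 1 := by
  simpa using hasSum_poisWeight_mul_prod_pow r 1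

theorem hasSum_ite_even_sum_poisWeight_mul_prod_pow (r z : ι → ℝ) :
    HasSum (fun g : ι → ℕ => if Even (∑ i, g i) then poisWeight r g * ∏ i, z i ^ g i else 0)
      ((∏ i, exp (r i * (z i - 1)) + ∏ i, exp (r i * (-z i - 1))) / 2) := by
  refine (((hasSum_poisWeight_mul_prod_pow r z).add
    (hasSum_poisWeight_mul_prod_pow r (-z))).div_const 2).congr_fun fun g => ?_
  have hsign : ∏ i, (-z) i ^ g i = (-1) ^ (∑ i, g i) * ∏ i, z i ^ g i := by
    simp only [Pi.neg_apply, neg_pow (z _), prod_mul_distrib, prod_pow_eq_pow_sum]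
  rw [hsign]
  rcases Nat.even_or_odd (∑ i, g i) with hg | hg
  · simp only [hg, if_true, hg.neg_one_pow]; ring
  · simp only [Nat.not_even_iff_odd.2 hg, if_false, hg.neg_one_pow]; ring

theorem hasSum_ite_even_sum_poisWeight (r : ι → ℝ) :
    HasSum (fun g : ι → ℕ => if Even (∑ i, g i) then poisWeight r g else 0)
      ((1 + ∏ i, exp (-2 * r i)) / 2) := by
  have h := hasSum_ite_even_sum_poisWeight_mul_prod_pow r 1
  simp only [Pi.one_apply, one_pow, prod_const_one, mul_one, sub_self, mul_zero, exp_zero] at h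
  simpa only [show ∀ i, r i * (-1 - 1) = -2 * r i from fun i => by ring] using h

end PoissonWeight

section BoundaryParity

variable {N : ℕ}

theorem natCast_zmod_two_eq_iff (a b : ℕ) : (a : ZMod 2) = b ↔ (Odd a ↔ Odd b) := by
  rw [ZMod.natCast_eq_natCast_iff', Nat.odd_iff, Nat.odd_iff]
  omega

theorem cast_touch_eq_sum (a : Fin N → ℕ) (v : Fin (N + 1)) :
    (touch N a v : ZMod 2) =
      ∑ x, ((if v = x.castSucc then (a x : ZMod 2) else 0) +
        if v = x.succ then (a x : ZMod 2) else 0) := by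
  simp only [touch, Nat.cast_sum]
  refine sum_congr rfl fun x _ => ?_
  have hne : x.castSucc ≠ x.succ := Fin.castSucc_lt_succ.ne
  by_cases h1 : v = x.castSucc <;> by_cases h2 : v = x.succ <;> simp_all

theorem sum_cast_touch_eq_zero (a : Fin N → ℕ) : ∑ v, (touch N a v : ZMod 2) = 0 := by
  simp only [cast_touch_eq_sum]
  rw [Finset.sum_comm]
  simp [sum_add_distrib, CharTwo.add_self_eq_zero]

theorem sum_filter_le_cast_touch (a : Fin N → ℕ) (x : Fin N) :
    ∑ v ∈ univ.filter (fun v : Fin (N + 1) => (v : ℕ) ≤ x), (touch N a v : ZMod 2) = a x := by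
  simp only [cast_touch_eq_sum]
  rw [Finset.sum_comm]
  simp only [sum_add_distrib, sum_ite_eq', mem_filter, mem_univ, true_and, Fin.val_castSucc,
    Fin.val_succ]
  rw [← Fintype.sum_ite_eq' x fun z : Fin N => (a z : ZMod 2), ← sum_add_distrib]
  refine sum_congr rfl fun z _ => ?_
  rcases lt_trichotomy z x with hzx | rfl | hzx
  · have h1 : (z : ℕ) ≤ x := hzx.le
    have h2 : (z : ℕ) + 1 ≤ x := hzx
    simp [h1, h2, hzx.ne, CharTwo.add_self_eq_zero]
  · simp
  · have h1 : ¬ (z : ℕ) ≤ x := not_le.2 hzx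
    have h2 : ¬ (z : ℕ) + 1 ≤ x := by omega
    simp [h1, h2, hzx.ne']

theorem eq_zero_of_sum_filter_le_eq_zero {M : Type*} [AddCommGroup M] (d : Fin (N + 1) → M)
    (hcut : ∀ x : Fin N, ∑ v ∈ univ.filter (fun v : Fin (N + 1) => (v : ℕ) ≤ x), d v = 0)
    (htotal : ∑ v, d v = 0) : d = 0 := by
  set S : ℕ → M := fun k => ∑ v ∈ univ.filter (fun v : Fin (N + 1) => (v : ℕ) < k), d v
  have hS : ∀ k ≤ N + 1, S k = 0 := by
    rintro (_ | k) hk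
    · simp [S]
    · rcases Nat.lt_or_ge k N with hkN | hkN
      · simpa [S, Nat.lt_succ_iff] using hcut ⟨k, hkN⟩
      · have : ∀ v : Fin (N + 1), (v : ℕ) < k + 1 := fun v => by omega
        simpa [S, this] using htotal
  funext v
  have hdiff : S (v + 1) - S v = d v := by
    simp only [S, sum_filter, ← sum_sub_distrib]
    rw [← Fintype.sum_ite_eq' v d]
    refine sum_congr rfl fun w _ => ?_
    rcases lt_trichotomy (w : ℕ) v with hw | hw | hw
    · simp [hw, hw.trans (Nat.lt_succ_self _), Fin.ne_of_lt hw]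
    · simp [Fin.ext hw]
    · simp [hw.not_gt, show ¬ (w : ℕ) < v + 1 by omega, (Fin.ne_of_lt hw).symm]
  rw [← hdiff, hS _ (by omega), hS _ (by omega), sub_self, Pi.zero_apply]

theorem boundary_parity_iff (nL : Fin N → ℕ) (ng : Fin (N + 1) → ℕ) :
    ((∀ v, (Odd (touch N nL v) ↔ Odd (ng v))) ∧ Even (∑ v, ng v)) ↔
      (∀ x, (Odd (nL x) ↔ Odd (lsum N ng x))) ∧ Even (∑ v, ng v) := by
  have hlsum x : (lsum N ng x : ZMod 2) =
      ∑ v ∈ univ.filter (fun v : Fin (N + 1) => (v : ℕ) ≤ x), (ng v : ZMod 2) := by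
    simp [lsum, sum_filter]
  simp only [← natCast_zmod_two_eq_iff, ← ZMod.natCast_eq_zero_iff_even, Nat.cast_sum]
  refine and_congr_left fun htotal => ⟨fun hc x => ?_, fun ha v => ?_⟩
  · rw [hlsum, ← sum_filter_le_cast_touch nL x]
    exact sum_congr rfl fun v _ => hc v
  · have hd := eq_zero_of_sum_filter_le_eq_zero (fun v => (touch N nL v : ZMod 2) - ng v)
      (fun x => by rw [sum_sub_distrib, sum_filter_le_cast_touch, ha, hlsum, sub_self])
      (by rw [sum_sub_distrib, sum_cast_touch_eq_zero, htotal, sub_self])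
    exact sub_eq_zero.1 (congrFun hd v)

end BoundaryParity

section SignExpansion

variable {N : ℕ}

theorem ite_odd_iff_odd_eq (m n : ℕ) :
    (if (Odd m ↔ Odd n) then (1 : ℝ) else 0) = (1 + (-1) ^ m * (-1) ^ n) / 2 := by
  rcases Nat.even_or_odd m with hm | hm <;> rcases Nat.even_or_odd n with hn | hn <;>
    simp [hm, hn, hm.neg_one_pow, hn.neg_one_pow, ← Nat.not_even_iff_odd]

noncomputable def cutSign (t : Finset (Fin N)) (y : Fin (N + 1)) : ℝ :=
  (-1) ^ #(t.filter fun x : Fin N => (y : ℕ) ≤ x)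

theorem prod_neg_one_pow_lsum (ng : Fin (N + 1) → ℕ) (t : Finset (Fin N)) :
    ∏ x ∈ t, (-1 : ℝ) ^ lsum N ng x = ∏ y, cutSign t y ^ ng y := by
  simp only [cutSign, ← pow_mul, prod_pow_eq_pow_sum, lsum, sum_comm (s := t)]
  congr 1
  refine sum_congr rfl fun y _ => ?_
  rw [← sum_filter, sum_const, smul_eq_mul, mul_comm]

theorem ite_boundary_eq_sum_powerset (nL : Fin N → ℕ) (ng : Fin (N + 1) → ℕ) :
    (if (∀ v, (Odd (touch N nL v) ↔ Odd (ng v))) ∧ Even (∑ v, ng v) then (1 : ℝ) else 0) =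
      (∑ t ∈ univ.powerset, (∏ x, (if x ∈ t then -1 else 1 : ℝ) ^ nL x) *
        if Even (∑ v, ng v) then ∏ y, cutSign t y ^ ng y else 0) / 2 ^ N := by
  rw [if_congr (boundary_parity_iff nL ng) rfl rfl]
  by_cases he : Even (∑ v, ng v)
  · have hprod : (if ∀ x, (Odd (nL x) ↔ Odd (lsum N ng x)) then (1 : ℝ) else 0) =
        ∏ x, (1 + (-1) ^ nL x * (-1) ^ lsum N ng x) / 2 := by
      simp only [← ite_odd_iff_odd_eq, prod_boole, mem_univ, true_implies]
    simp only [he, and_true, if_true, hprod, prod_div_distrib, prod_const, card_univ,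
      Fintype.card_fin, prod_one_add, prod_mul_distrib, prod_neg_one_pow_lsum]
    congr 2 with t
    simp [ite_pow, prod_ite_mem]
  · simp [he]

end SignExpansion

section Weights

variable {N : ℕ} (J : Fin N → ℝ) (h : Fin (N + 1) → ℝ)

theorem rcWeight_eq (p : (Fin N → ℕ) × (Fin (N + 1) → ℕ)) :
    rcWeight N J h p = poisWeight J p.1 * poisWeight h p.2 := rfl

theorem hasSum_ite_boundary_rcWeight :
    HasSum (fun p : (Fin N → ℕ) × (Fin (N + 1) → ℕ) =>
        if (∀ v, (Odd (touch N p.1 v) ↔ Odd (p.2 v))) ∧ Even (∑ v, p.2 v)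
          then rcWeight N J h p else 0)
      ((∑ t ∈ univ.powerset, (∏ x, exp (J x * ((if x ∈ t then -1 else 1) - 1))) *
        ((∏ y, exp (h y * (cutSign t y - 1)) + ∏ y, exp (h y * (-cutSign t y - 1))) / 2)) /
          2 ^ N) := by
  refine ((hasSum_sum fun t _ => (hasSum_poisWeight_mul_prod_pow J _).mul_real
    (hasSum_ite_even_sum_poisWeight_mul_prod_pow h (cutSign t))).div_const _).congr_fun
      fun p => ?_
  rw [← boole_mul, ite_boundary_eq_sum_powerset, div_mul_eq_mul_div, sum_mul, rcWeight_eq]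
  congr 1
  refine sum_congr rfl fun t _ => ?_
  split_ifs <;> ring

theorem le_tsum_ite_boundary_rcWeight :
    (1 + ∏ y, exp (-2 * h y)) / 2 / 2 ^ N ≤
      ∑' p : (Fin N → ℕ) × (Fin (N + 1) → ℕ),
        if (∀ v, (Odd (touch N p.1 v) ↔ Odd (p.2 v))) ∧ Even (∑ v, p.2 v)
          then rcWeight N J h p else 0 := by
  rw [(hasSum_ite_boundary_rcWeight J h).tsum_eq]
  gcongr
  refine le_of_eq_of_le ?_ (single_le_sum (fun t _ => by positivity) (empty_mem_powerset univ))
  simp only [cutSign, notMem_empty, if_false, filter_empty, card_empty, pow_zero, sub_self,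
    mul_zero, exp_zero, prod_const_one, one_mul]
  ring_nf

theorem hasSum_ite_even_rcWeight :
    HasSum (fun p : (Fin N → ℕ) × (Fin (N + 1) → ℕ) =>
        if Even (∑ v, p.2 v) then rcWeight N J h p else 0) ((1 + ∏ y, exp (-2 * h y)) / 2) := by
  have hprod := (hasSum_poisWeight J).mul_real (hasSum_ite_even_sum_poisWeight h)
  rw [one_mul] at hprod
  refine hprod.congr_fun fun p => ?_
  rw [mul_ite, mul_zero, rcWeight_eq]

theorem hasSum_ite_forall_even_rcWeight :
    HasSum (fun p : (Fin N → ℕ) × (Fin (N + 1) → ℕ) =>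
        if ∀ x, Even (p.1 x) then rcWeight N J h p else 0) (∏ x, (1 + exp (-2 * J x)) / 2) := by
  have hprod := (hasSum_prod_pi fun x => hasSum_ite_even_poisPMF (J x)).mul_real
    (hasSum_poisWeight h)
  rw [mul_one] at hprod
  refine hprod.congr_fun fun p => ?_
  simp only [prod_ite_zero, mem_univ, true_implies, ite_mul, zero_mul, rcWeight_eq, poisWeight]

end Weights

theorem one_add_tanh_mul_one_add_exp (r : ℝ) : (1 + tanh r) * (1 + exp (-2 * r)) = 2 := by
  have hr : exp r * exp (-r) = 1 := by rw [← exp_add, add_neg_cancel, exp_zero]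
  rw [tanh_eq_sinh_div_cosh, sinh_eq, cosh_eq, show -2 * r = -r + -r by ring, exp_add]
  field_simp
  linear_combination 2 * exp (-r) * hr

theorem conditional_probability_lower_bound_general (N : ℕ) (J : Fin N → ℝ) (h : Fin (N + 1) → ℝ) :
    (∑' p : (Fin N → ℕ) × (Fin (N + 1) → ℕ),
          if (∀ v : Fin (N + 1), (Odd (touch N p.1 v) ↔ Odd (p.2 v))) ∧
              Even (∑ x, p.2 x) then rcWeight N J h p else 0) /
        (∑' p : (Fin N → ℕ) × (Fin (N + 1) → ℕ),
          if Even (∑ x, p.2 x) then rcWeight N J h p else 0) /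
      (∑' p : (Fin N → ℕ) × (Fin (N + 1) → ℕ),
          if (∀ x, Even (p.1 x)) then rcWeight N J h p else 0) ≥
    ∏ x : Fin N, (1 + Real.tanh (J x)) / 2 := by
  rw [(hasSum_ite_even_rcWeight J h).tsum_eq, (hasSum_ite_forall_even_rcWeight J h).tsum_eq,
    ge_iff_le, le_div_iff₀ (by positivity), le_div_iff₀ (by positivity)]
  calc (∏ x, (1 + tanh (J x)) / 2) * (∏ x, (1 + exp (-2 * J x)) / 2) *
        ((1 + ∏ y, exp (-2 * h y)) / 2)
      = (1 + ∏ y, exp (-2 * h y)) / 2 / 2 ^ N := by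
        rw [← prod_mul_distrib]
        simp only [div_mul_div_comm, one_add_tanh_mul_one_add_exp, prod_const, card_univ,
          Fintype.card_fin, show (2 : ℝ) / (2 * 2) = 2⁻¹ by norm_num, inv_pow]
        ring
    _ ≤ _ := le_tsum_ite_boundary_rcWeight J h

theorem conditional_probability_lower_bound (N : ℕ) (J : Fin N → ℝ) (h : Fin (N + 1) → ℝ)
    (hJ : ∀ x, 0 < J x) (hh : ∀ x, 0 ≤ h x) :
    (∑' p : (Fin N → ℕ) × (Fin (N + 1) → ℕ),
          if (∀ v : Fin (N + 1), (Odd (touch N p.1 v) ↔ Odd (p.2 v))) ∧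
              Even (∑ x, p.2 x) then rcWeight N J h p else 0) /
        (∑' p : (Fin N → ℕ) × (Fin (N + 1) → ℕ),
          if Even (∑ x, p.2 x) then rcWeight N J h p else 0) /
      (∑' p : (Fin N → ℕ) × (Fin (N + 1) → ℕ),
          if (∀ x, Even (p.1 x)) then rcWeight N J h p else 0) ≥
    ∏ x : Fin N, (1 + Real.tanh (J x)) / 2 :=
  conditional_probability_lower_bound_general N J h
end

section
/- For the one-dimensional Ising model on {0,…,N} with nonnegative couplings J_x > 0 and nonnegative external fields h_x ≥ 0, the endpoint covariance satisfies Cov(σ_0, σ_N) ≤ ( ∏_{x=0}^{N-1} 4·tanh(J_x)/(1+tanh(J_x))² ) · 1/cosh²( Σ_{x=0}^N h_x ). -/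
open Finset

/-- The spin value of a Boolean: `true ↦ +1`, `false ↦ -1`. -/
noncomputable def sp (b : Bool) : ℝ := if b then 1 else -1

/-- Hamiltonian of the 1D Ising chain on `{0, …, N}` with couplings `J` and fields `h`. -/
noncomputable def ham (N : ℕ) (J : Fin N → ℝ) (h : Fin (N + 1) → ℝ)
    (σ : Fin (N + 1) → Bool) : ℝ :=
  -(∑ x : Fin N, J x * sp (σ x.castSucc) * sp (σ x.succ)) - ∑ x : Fin (N + 1), h x * sp (σ x)

/-- Partition function of the 1D Ising chain. -/
noncomputable def part (N : ℕ) (J : Fin N → ℝ) (h : Fin (N + 1) → ℝ) : ℝ :=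
  ∑ σ : Fin (N + 1) → Bool, Real.exp (-(ham N J h σ))

/-- Gibbs probability of a configuration. -/
noncomputable def gibbs (N : ℕ) (J : Fin N → ℝ) (h : Fin (N + 1) → ℝ)
    (σ : Fin (N + 1) → Bool) : ℝ :=
  Real.exp (-(ham N J h σ)) / part N J h

/-- Gibbs expectation of an observable. -/
noncomputable def gibbsE (N : ℕ) (J : Fin N → ℝ) (h : Fin (N + 1) → ℝ)
    (f : (Fin (N + 1) → Bool) → ℝ) : ℝ :=
  ∑ σ : Fin (N + 1) → Bool, gibbs N J h σ * f σ

/-- Covariance of the endpoint spins `σ_0` and `σ_N` under the Gibbs measure. -/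
noncomputable def covEnds (N : ℕ) (J : Fin N → ℝ) (h : Fin (N + 1) → ℝ) : ℝ :=
  gibbsE N J h (fun σ => sp (σ 0) * sp (σ (Fin.last N))) -
    gibbsE N J h (fun σ => sp (σ 0)) * gibbsE N J h (fun σ => sp (σ (Fin.last N)))

open Real

/-!
Decimation. Summing out the spin `σ₀` at fixed `σ₁ = y ∈ {±1}` produces the weight
`2 cosh (J₀ y + h₀) = C exp (δ y)` and the conditional mean `tanh (J₀ y + h₀) = a + b y`, where
`C`, `δ`, `a`, `b` are `decimationScale`, `fieldShift`, `condMeanOffset`, `condMeanSlope` at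
`(J₀, h₀)`. Hence the law of `(σ₁, …, σ_N)` is again an Ising chain, with couplings
`J₁, …, J_{N-1}` and the field at site `1` raised by `δ`, and `Cov (σ₀, σ_N) = b · Cov' (σ₁, σ_N)`;
at `N = 0` the covariance is `1 - tanh² h₀ = 1 / cosh² h₀`. For `J₀, h₀ ≥ 0` one has
`0 ≤ δ ≤ h₀` and `b ≤ 4 tanh J₀ / (1 + tanh J₀)² · exp (2 (δ - h₀))`, while
`cosh (h₀ + S) ≤ exp (h₀ - δ) cosh (S + δ)`, so the bound passes from the shorter chain, whose
total field is `S + δ`, to the longer one, whose total field is `h₀ + S`.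
-/

@[simp] lemma sp_true : sp true = 1 := rfl

@[simp] lemma sp_false : sp false = -1 := rfl

lemma sp_mul_self (b : Bool) : sp b * sp b = 1 := by
  cases b <;> norm_num

lemma sum_exp_sp_mul (x : ℝ) : ∑ s : Bool, exp (sp s * x) = 2 * cosh x := by
  rw [Fintype.sum_bool, sp_true, sp_false, one_mul, neg_one_mul, cosh_eq]
  ring

lemma sum_sp_mul_exp_sp_mul (x : ℝ) :
    ∑ s : Bool, sp s * exp (sp s * x) = tanh x * (2 * cosh x) := by
  rw [Fintype.sum_bool, sp_true, sp_false, one_mul, one_mul, neg_one_mul, neg_one_mul,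
    tanh_eq_sinh_div_cosh, div_mul_eq_mul_div, mul_div_assoc,
    mul_div_cancel_right₀ _ (cosh_pos x).ne', sinh_eq]
  ring

noncomputable def fieldShift (j p : ℝ) : ℝ := (log (cosh (j + p)) - log (cosh (j - p))) / 2

noncomputable def decimationScale (j p : ℝ) : ℝ :=
  2 * exp ((log (cosh (j + p)) + log (cosh (j - p))) / 2)

noncomputable def condMeanOffset (j p : ℝ) : ℝ := (tanh (j + p) + tanh (p - j)) / 2

noncomputable def condMeanSlope (j p : ℝ) : ℝ := (tanh (j + p) - tanh (p - j)) / 2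

lemma decimationScale_pos (j p : ℝ) : 0 < decimationScale j p := by
  unfold decimationScale
  positivity

lemma two_mul_cosh_eq_decimationScale_mul (j p : ℝ) (y : Bool) :
    2 * cosh (j * sp y + p) = decimationScale j p * exp (fieldShift j p * sp y) := by
  rw [decimationScale, fieldShift, mul_assoc, ← exp_add]
  cases y
  · conv_lhs => rw [sp_false, show j * -1 + p = -(j - p) by ring, cosh_neg,
      ← exp_log (cosh_pos (j - p))]
    congr 2
    rw [sp_false]
    ring
  · conv_lhs => rw [sp_true, mul_one, ← exp_log (cosh_pos (j + p))]
    congr 2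
    rw [sp_true]
    ring

lemma tanh_eq_condMeanOffset_add (j p : ℝ) (y : Bool) :
    tanh (j * sp y + p) = condMeanOffset j p + condMeanSlope j p * sp y := by
  cases y <;> simp only [sp_false, sp_true, mul_neg, mul_one, condMeanOffset, condMeanSlope] <;>
    ring_nf

lemma cosh_add_le_exp_mul_cosh (u : ℝ) {v : ℝ} (hv : 0 ≤ v) : cosh (u + v) ≤ exp v * cosh u := by
  have : exp (-u) * exp (-v) ≤ exp (-u) * exp v :=
    mul_le_mul_of_nonneg_left (exp_le_exp.2 (by linarith)) (exp_pos _).le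
  rw [cosh_eq, cosh_eq, neg_add, exp_add, exp_add]
  linarith

lemma exp_two_mul_fieldShift (j p : ℝ) :
    exp (2 * fieldShift j p) = cosh (j + p) / cosh (j - p) := by
  rw [fieldShift, mul_div_cancel₀ _ two_ne_zero, exp_sub, exp_log (cosh_pos _),
    exp_log (cosh_pos _)]

lemma fieldShift_nonneg {j p : ℝ} (hj : 0 ≤ j) (hp : 0 ≤ p) : 0 ≤ fieldShift j p := by
  have : cosh (j - p) ≤ cosh (j + p) := by
    rw [cosh_le_cosh, abs_of_nonneg (by linarith : 0 ≤ j + p), abs_le]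
    constructor <;> linarith
  rw [fieldShift, sub_div]
  linarith [log_le_log (cosh_pos _) this]

lemma fieldShift_le (j : ℝ) {p : ℝ} (hp : 0 ≤ p) : fieldShift j p ≤ p := by
  have h := cosh_add_le_exp_mul_cosh (j - p) (by linarith : 0 ≤ 2 * p)
  rw [show j - p + 2 * p = j + p by ring, ← div_le_iff₀ (cosh_pos _),
    ← exp_two_mul_fieldShift, exp_le_exp] at h
  linarith

lemma condMeanSlope_eq (j p : ℝ) :
    condMeanSlope j p = sinh (2 * j) / (2 * (cosh (j + p) * cosh (j - p))) := by
  rw [condMeanSlope, tanh_eq_sinh_div_cosh, tanh_eq_sinh_div_cosh, div_sub_div _ _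
    (cosh_pos _).ne' (cosh_pos _).ne', ← sinh_sub, show j + p - (p - j) = 2 * j by ring,
    show p - j = -(j - p) by ring, cosh_neg]
  ring

lemma condMeanSlope_nonneg {j p : ℝ} (hj : 0 ≤ j) : 0 ≤ condMeanSlope j p := by
  rw [condMeanSlope_eq]
  have : 0 ≤ sinh (2 * j) := sinh_nonneg_iff.2 (by linarith)
  positivity

lemma four_mul_tanh_div_one_add_tanh_sq (j : ℝ) :
    4 * tanh j / (1 + tanh j) ^ 2 = 2 * sinh (2 * j) * exp (-(2 * j)) := by
  have hc := (cosh_pos j).ne'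
  have : 1 + tanh j = exp j / cosh j := by
    rw [tanh_eq_sinh_div_cosh, ← cosh_add_sinh, add_div, div_self hc]
  rw [this, tanh_eq_sinh_div_cosh, sinh_two_mul, two_mul j, exp_neg, exp_add]
  field_simp
  ring

lemma four_mul_tanh_div_one_add_tanh_sq_nonneg {j : ℝ} (hj : 0 ≤ j) :
    0 ≤ 4 * tanh j / (1 + tanh j) ^ 2 := by
  rw [four_mul_tanh_div_one_add_tanh_sq]
  have : 0 ≤ sinh (2 * j) := sinh_nonneg_iff.2 (by linarith)
  positivity

lemma condMeanSlope_le {j p : ℝ} (hj : 0 ≤ j) :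
    condMeanSlope j p ≤ 4 * tanh j / (1 + tanh j) ^ 2 * exp (2 * (fieldShift j p - p)) := by
  -- `2 cosh x · exp (-x) = 1 + exp (-2x)`
  have key : 1 ≤ (2 * cosh (j + p) * exp (-(j + p))) ^ 2 := by
    refine one_le_pow₀ ?_
    have : exp (j + p) * exp (-(j + p)) = 1 := by rw [← exp_add, add_neg_cancel, exp_zero]
    rw [cosh_eq]
    nlinarith [exp_pos (-(j + p))]
  have hE : exp (-(j + p)) ^ 2 = exp (-(2 * j)) / exp (2 * p) := by
    rw [← exp_sub, sq, ← exp_add]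
    ring_nf
  calc condMeanSlope j p
      ≤ condMeanSlope j p * (2 * cosh (j + p) * exp (-(j + p))) ^ 2 :=
        le_mul_of_one_le_right (condMeanSlope_nonneg hj) key
    _ = 4 * tanh j / (1 + tanh j) ^ 2 * exp (2 * (fieldShift j p - p)) := by
        rw [condMeanSlope_eq, four_mul_tanh_div_one_add_tanh_sq, mul_sub, exp_sub,
          exp_two_mul_fieldShift, mul_pow, hE]
        field_simp

lemma condMeanSlope_div_cosh_sq_le {j p : ℝ} (hj : 0 ≤ j) (hp : 0 ≤ p) (S : ℝ) :
    condMeanSlope j p * (1 / cosh (S + fieldShift j p) ^ 2) ≤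
      4 * tanh j / (1 + tanh j) ^ 2 * (1 / cosh (p + S) ^ 2) := by
  set δ := fieldShift j p
  have hcosh : exp (δ - p) * cosh (p + S) ≤ cosh (S + δ) := by
    have := cosh_add_le_exp_mul_cosh (S + δ) (sub_nonneg.2 (fieldShift_le j hp))
    rw [show S + δ + (p - δ) = p + S by ring] at this
    calc exp (δ - p) * cosh (p + S) ≤ exp (δ - p) * (exp (p - δ) * cosh (S + δ)) :=
          mul_le_mul_of_nonneg_left this (exp_pos _).le
      _ = cosh (S + δ) := by rw [← mul_assoc, ← exp_add, sub_add_sub_cancel, sub_self, exp_zero,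
          one_mul]
  calc condMeanSlope j p * (1 / cosh (S + δ) ^ 2)
      ≤ 4 * tanh j / (1 + tanh j) ^ 2 * exp (2 * (δ - p)) * (1 / cosh (S + δ) ^ 2) :=
        mul_le_mul_of_nonneg_right (condMeanSlope_le hj) (by positivity)
    _ = 4 * tanh j / (1 + tanh j) ^ 2 * (exp (δ - p) ^ 2 / cosh (S + δ) ^ 2) := by
        rw [mul_assoc, mul_one_div, two_mul (δ - p), exp_add, ← sq]
    _ ≤ 4 * tanh j / (1 + tanh j) ^ 2 * (1 / cosh (p + S) ^ 2) := by
        refine mul_le_mul_of_nonneg_left ?_ (four_mul_tanh_div_one_add_tanh_sq_nonneg hj)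
        rw [div_le_div_iff₀ (by positivity) (by positivity), one_mul, ← mul_pow]
        gcongr

noncomputable def boltzmannSum (N : ℕ) (J : Fin N → ℝ) (h : Fin (N + 1) → ℝ)
    (f : (Fin (N + 1) → Bool) → ℝ) : ℝ :=
  ∑ σ : Fin (N + 1) → Bool, exp (-ham N J h σ) * f σ

section Chain

variable {N : ℕ}

lemma boltzmannSum_one_pos (J : Fin N → ℝ) (h : Fin (N + 1) → ℝ) :
    0 < boltzmannSum N J h (fun _ => 1) :=
  sum_pos (fun _ _ => by positivity) univ_nonempty

lemma gibbsE_eq_div (J : Fin N → ℝ) (h : Fin (N + 1) → ℝ) (f : (Fin (N + 1) → Bool) → ℝ) :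
    gibbsE N J h f = boltzmannSum N J h f / boltzmannSum N J h (fun _ => 1) := by
  simp only [gibbsE, gibbs, boltzmannSum, part, mul_one, div_mul_eq_mul_div, sum_div]

lemma ham_cons (J : Fin (N + 1) → ℝ) (h : Fin (N + 2) → ℝ) (s : Bool)
    (τ : Fin (N + 1) → Bool) :
    ham (N + 1) J h (Fin.cons s τ) =
      ham N (Fin.tail J) (Fin.tail h) τ - sp s * (J 0 * sp (τ 0) + h 0) := by
  simp only [ham, Fin.sum_univ_succ (n := N), Fin.sum_univ_succ (n := N + 1), Fin.castSucc_zero,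
    Fin.cons_zero, Fin.cons_succ, ← Fin.succ_castSucc, Fin.tail]
  ring

lemma ham_add_field_zero (J : Fin N → ℝ) (h : Fin (N + 1) → ℝ) (d : ℝ)
    (τ : Fin (N + 1) → Bool) :
    ham N J (fun i => h i + if i = 0 then d else 0) τ = ham N J h τ - d * sp (τ 0) := by
  simp only [ham, add_mul, sum_add_distrib, ite_mul, zero_mul, sum_ite_eq', mem_univ, if_true]
  ring

lemma boltzmannSum_add_field_zero (J : Fin N → ℝ) (h : Fin (N + 1) → ℝ) (d : ℝ)
    (g : (Fin (N + 1) → Bool) → ℝ) :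
    boltzmannSum N J (fun i => h i + if i = 0 then d else 0) g =
      boltzmannSum N J h (fun τ => exp (d * sp (τ 0)) * g τ) := by
  refine sum_congr rfl fun τ _ => ?_
  rw [ham_add_field_zero, neg_sub, sub_eq_add_neg, exp_add]
  ring

lemma boltzmannSum_succ (J : Fin (N + 1) → ℝ) (h : Fin (N + 2) → ℝ) (φ : Bool → ℝ)
    (g : (Fin (N + 1) → Bool) → ℝ) :
    boltzmannSum (N + 1) J h (fun σ => φ (σ 0) * g (Fin.tail σ)) =
      boltzmannSum N (Fin.tail J) (Fin.tail h)
        (fun τ => (∑ s : Bool, φ s * exp (sp s * (J 0 * sp (τ 0) + h 0))) * g τ) := by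
  rw [boltzmannSum, ← (Fin.consEquiv fun _ => Bool).sum_comp, Fintype.sum_prod_type_right]
  refine sum_congr rfl fun τ _ => ?_
  simp only [Fin.consEquiv, Equiv.coe_fn_mk, Fin.cons_zero, Fin.tail_cons, ham_cons, sum_mul,
    mul_sum]
  refine sum_congr rfl fun s _ => ?_
  rw [neg_sub, sub_eq_add_neg, exp_add]
  ring

lemma boltzmannSum_add_mul (J : Fin N → ℝ) (h : Fin (N + 1) → ℝ) (a b : ℝ)
    (f g : (Fin (N + 1) → Bool) → ℝ) :
    boltzmannSum N J h (fun σ => (a + b * f σ) * g σ) =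
      a * boltzmannSum N J h g + b * boltzmannSum N J h (fun σ => f σ * g σ) := by
  simp only [boltzmannSum, mul_sum, ← sum_add_distrib]
  exact sum_congr rfl fun σ _ => by ring

lemma gibbsE_one (J : Fin N → ℝ) (h : Fin (N + 1) → ℝ) : gibbsE N J h (fun _ => 1) = 1 := by
  rw [gibbsE_eq_div, div_self (boltzmannSum_one_pos J h).ne']

lemma boltzmannSum_zero (J : Fin 0 → ℝ) (h : Fin 1 → ℝ) (f : (Fin 1 → Bool) → ℝ) :
    boltzmannSum 0 J h f = ∑ s : Bool, exp (sp s * h 0) * f (fun _ => s) := by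
  rw [boltzmannSum, ← (Equiv.funUnique (Fin 1) Bool).symm.sum_comp]
  refine sum_congr rfl fun s _ => ?_
  show exp (-ham 0 J h fun _ => s) * f (fun _ => s) = _
  rw [ham, Fin.sum_univ_zero, Fin.sum_univ_one, neg_zero, zero_sub, neg_neg, mul_comm (h 0)]

lemma gibbsE_sp_zero_eq_tanh (J : Fin 0 → ℝ) (h : Fin 1 → ℝ) :
    gibbsE 0 J h (fun σ => sp (σ 0)) = tanh (h 0) := by
  rw [gibbsE_eq_div, boltzmannSum_zero, boltzmannSum_zero]
  simp only [mul_comm (exp _), one_mul, sum_exp_sp_mul, sum_sp_mul_exp_sp_mul]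
  exact mul_div_cancel_right₀ _ (by positivity)

lemma covEnds_zero (J : Fin 0 → ℝ) (h : Fin 1 → ℝ) : covEnds 0 J h = 1 / cosh (h 0) ^ 2 := by
  have hc := (cosh_pos (h 0)).ne'
  simp only [covEnds, Fin.last_zero, sp_mul_self, gibbsE_one, gibbsE_sp_zero_eq_tanh,
    tanh_eq_sinh_div_cosh]
  field_simp
  linarith [cosh_sq (h 0)]

end Chain

noncomputable def decimatedField {N : ℕ} (J : Fin (N + 1) → ℝ) (h : Fin (N + 2) → ℝ) :
    Fin (N + 1) → ℝ :=
  fun i => Fin.tail h i + if i = 0 then fieldShift (J 0) (h 0) else 0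

section Decimation

variable {N : ℕ} (J : Fin (N + 1) → ℝ) (h : Fin (N + 2) → ℝ)

lemma sum_decimatedField :
    ∑ i, decimatedField J h i = ∑ i : Fin (N + 1), h i.succ + fieldShift (J 0) (h 0) := by
  simp [decimatedField, sum_add_distrib, Fin.tail]

lemma boltzmannSum_tail (g : (Fin (N + 1) → Bool) → ℝ) :
    boltzmannSum (N + 1) J h (fun σ => g (Fin.tail σ)) =
      decimationScale (J 0) (h 0) * boltzmannSum N (Fin.tail J) (decimatedField J h) g := by
  have := boltzmannSum_succ J h (fun _ => 1) g
  simp only [one_mul, sum_exp_sp_mul, two_mul_cosh_eq_decimationScale_mul] at this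
  unfold decimatedField
  rw [this, boltzmannSum_add_field_zero, boltzmannSum, boltzmannSum, mul_sum]
  exact sum_congr rfl fun τ _ => by ring

lemma boltzmannSum_sp_zero_mul_tail (g : (Fin (N + 1) → Bool) → ℝ) :
    boltzmannSum (N + 1) J h (fun σ => sp (σ 0) * g (Fin.tail σ)) =
      decimationScale (J 0) (h 0) * boltzmannSum N (Fin.tail J) (decimatedField J h)
        (fun τ => (condMeanOffset (J 0) (h 0) + condMeanSlope (J 0) (h 0) * sp (τ 0)) * g τ) := by
  have := boltzmannSum_succ J h sp g
  simp only [sum_sp_mul_exp_sp_mul, two_mul_cosh_eq_decimationScale_mul,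
    tanh_eq_condMeanOffset_add] at this
  unfold decimatedField
  rw [this, boltzmannSum_add_field_zero, boltzmannSum, boltzmannSum, mul_sum]
  exact sum_congr rfl fun τ _ => by ring

lemma gibbsE_tail (g : (Fin (N + 1) → Bool) → ℝ) :
    gibbsE (N + 1) J h (fun σ => g (Fin.tail σ)) =
      gibbsE N (Fin.tail J) (decimatedField J h) g := by
  have hC := (decimationScale_pos (J 0) (h 0)).ne'
  rw [gibbsE_eq_div, gibbsE_eq_div, boltzmannSum_tail, boltzmannSum_tail J h fun _ => 1,
    mul_div_mul_left _ _ hC]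

lemma gibbsE_sp_zero_mul_tail (g : (Fin (N + 1) → Bool) → ℝ) :
    gibbsE (N + 1) J h (fun σ => sp (σ 0) * g (Fin.tail σ)) =
      condMeanOffset (J 0) (h 0) * gibbsE N (Fin.tail J) (decimatedField J h) g +
        condMeanSlope (J 0) (h 0) *
          gibbsE N (Fin.tail J) (decimatedField J h) (fun τ => sp (τ 0) * g τ) := by
  have hC := (decimationScale_pos (J 0) (h 0)).ne'
  rw [gibbsE_eq_div, gibbsE_eq_div, gibbsE_eq_div, boltzmannSum_sp_zero_mul_tail,
    boltzmannSum_tail J h fun _ => 1, mul_div_mul_left _ _ hC, boltzmannSum_add_mul]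
  ring

lemma covEnds_succ :
    covEnds (N + 1) J h =
      condMeanSlope (J 0) (h 0) * covEnds N (Fin.tail J) (decimatedField J h) := by
  have h0 := gibbsE_sp_zero_mul_tail J h fun _ => 1
  have hL := gibbsE_tail J h fun τ => sp (τ (Fin.last N))
  have h0L := gibbsE_sp_zero_mul_tail J h fun τ => sp (τ (Fin.last N))
  simp only [mul_one, gibbsE_one] at h0
  simp only [Fin.tail, Fin.succ_last] at hL h0L
  rw [covEnds, covEnds, h0, hL, h0L]
  ring

end Decimation

lemma covEnds_le_of_nonneg {N : ℕ} (J : Fin N → ℝ) (h : Fin (N + 1) → ℝ) (hJ : ∀ x, 0 ≤ J x)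
    (hh : ∀ x, 0 ≤ h x) :
    covEnds N J h ≤
      (∏ x : Fin N, 4 * tanh (J x) / (1 + tanh (J x)) ^ 2) * (1 / cosh (∑ x, h x) ^ 2) := by
  induction N with
  | zero => simp [covEnds_zero]
  | succ n ih =>
    have hfield : ∀ x, 0 ≤ decimatedField J h x := fun x =>
      add_nonneg (hh _) (by split_ifs; exacts [fieldShift_nonneg (hJ 0) (hh 0), le_rfl])
    have hP : 0 ≤ ∏ x : Fin n, 4 * tanh (J x.succ) / (1 + tanh (J x.succ)) ^ 2 :=
      prod_nonneg fun x _ => four_mul_tanh_div_one_add_tanh_sq_nonneg (hJ _)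
    rw [covEnds_succ, Fin.prod_univ_succ, Fin.sum_univ_succ, mul_comm (4 * tanh (J 0) / _),
      mul_assoc]
    calc condMeanSlope (J 0) (h 0) * covEnds n (Fin.tail J) (decimatedField J h)
        ≤ condMeanSlope (J 0) (h 0) *
            ((∏ x : Fin n, 4 * tanh (J x.succ) / (1 + tanh (J x.succ)) ^ 2) *
              (1 / cosh (∑ x : Fin (n + 1), h x.succ + fieldShift (J 0) (h 0)) ^ 2)) := by
          rw [← sum_decimatedField]
          exact mul_le_mul_of_nonneg_left (ih _ _ (fun x => hJ _) hfield)
            (condMeanSlope_nonneg (hJ 0))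
      _ = _ := by rw [mul_left_comm]
      _ ≤ _ := mul_le_mul_of_nonneg_left (condMeanSlope_div_cosh_sq_le (hJ 0) (hh 0) _) hP

theorem covariance_upper_bound_ferromagnetic (N : ℕ) (J : Fin N → ℝ)
    (h : Fin (N + 1) → ℝ) (hJ : ∀ x, 0 < J x) (hh : ∀ x, 0 ≤ h x) :
    covEnds N J h ≤
      (∏ x : Fin N, 4 * Real.tanh (J x) / (1 + Real.tanh (J x)) ^ 2) *
        (1 / Real.cosh (∑ x, h x) ^ 2) :=
  covEnds_le_of_nonneg J h (fun x => (hJ x).le) hh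
end

section
/- For an Ising model on a finite graph with nonnegative couplings |J_e| and fields |h_x| = h_x^+ + h_x^-, where h_x^+ = max(h_x, 0) and h_x^- = |min(h_x, 0)|, the ratio of partition functions satisfies Z_{J,h} / Z_{|J|,|h|} ≥ ∏_x exp(-2 h_x^-) when J_e ≥ 0 for all edges (i.e., only the field signs differ). -/
open Finset

variable {V : Type*} [Fintype V] [DecidableEq V]

/-- Partition function of the Ising model on a finite graph with edge set `E`,
couplings `J` and external fields `h`. -/
noncomputable def gpart (E : Finset (V × V)) (J : V × V → ℝ) (h : V → ℝ) : ℝ :=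
  ∑ σ : V → Bool,
    Real.exp ((∑ e ∈ E, J e * sp (σ e.1) * sp (σ e.2)) + ∑ x : V, h x * sp (σ x))

/-- Gibbs expectation of an observable for the Ising model on a finite graph. -/
noncomputable def gexp (E : Finset (V × V)) (J : V × V → ℝ) (h : V → ℝ)
    (f : (V → Bool) → ℝ) : ℝ :=
  (∑ σ : V → Bool,
      Real.exp ((∑ e ∈ E, J e * sp (σ e.1) * sp (σ e.2)) + ∑ x : V, h x * sp (σ x)) * f σ) /
    gpart E J h

/-- Covariance of the spins at `i` and `j` under the Gibbs measure. -/
noncomputable def gcov (E : Finset (V × V)) (J : V × V → ℝ) (h : V → ℝ) (i j : V) : ℝ :=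
  gexp E J h (fun σ => sp (σ i) * sp (σ j)) -
    gexp E J h (fun σ => sp (σ i)) * gexp E J h (fun σ => sp (σ j))

/-!
Write `h x = |h x| - 2 h_x⁻`. Since every spin is at most `1` and `-2 h_x⁻ ≤ 0`, the field
energy satisfies `-2 h_x⁻ σ_x ≥ -2 h_x⁻`, so each Boltzmann weight with fields `h` dominates
`∏ₓ exp (-2 h_x⁻)` times the corresponding weight with fields `|h|`. Summing over configurations
gives the bound.
-/

lemma sp_le_one (b : Bool) : sp b ≤ 1 := by
  unfold sp; split <;> norm_num

lemma neg_two_mul_abs_min_zero (a : ℝ) : -2 * |min a 0| = a - |a| := by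
  rcases le_total 0 a with ha | ha
  · simp [ha, abs_of_nonneg ha]
  · rw [min_eq_left ha, abs_of_nonpos ha]; ring

lemma sub_abs_add_abs_mul_le_mul {a s : ℝ} (hs : s ≤ 1) : a - |a| + |a| * s ≤ a * s := by
  have : a - |a| ≤ (a - |a|) * s := le_mul_of_le_one_right (sub_nonpos.mpr (le_abs_self a)) hs
  linarith

lemma gpart_pos (E : Finset (V × V)) (J : V × V → ℝ) (h : V → ℝ) : 0 < gpart E J h :=
  sum_pos (fun _ _ => Real.exp_pos _) univ_nonempty

lemma exp_mul_gpart_le_gpart (E : Finset (V × V)) (J : V × V → ℝ) {h h' : V → ℝ} {c : ℝ}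
    (hc : ∀ σ : V → Bool, c + ∑ x, h' x * sp (σ x) ≤ ∑ x, h x * sp (σ x)) :
    Real.exp c * gpart E J h' ≤ gpart E J h := by
  rw [gpart, gpart, mul_sum]
  refine sum_le_sum fun σ _ => ?_
  rw [← Real.exp_add, Real.exp_le_exp]
  linarith [hc σ]

lemma exp_sum_sub_abs_mul_gpart_abs_le_gpart (E : Finset (V × V)) (J : V × V → ℝ)
    (h : V → ℝ) :
    Real.exp (∑ x, (h x - |h x|)) * gpart E J (fun x => |h x|) ≤ gpart E J h :=
  exp_mul_gpart_le_gpart E J fun σ => by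
    rw [← sum_add_distrib]
    exact sum_le_sum fun x _ => sub_abs_add_abs_mul_le_mul (sp_le_one (σ x))

theorem partition_ratio_lower_bound_general (E : Finset (V × V)) (J : V × V → ℝ) (h : V → ℝ) :
    gpart E J h / gpart E J (fun x => |h x|) ≥
      ∏ x : V, Real.exp (-2 * |min (h x) 0|) := by
  simp_rw [neg_two_mul_abs_min_zero, ← Real.exp_sum]
  rw [ge_iff_le, le_div_iff₀ (gpart_pos E J _)]
  exact exp_sum_sub_abs_mul_gpart_abs_le_gpart E J h

theorem partition_ratio_lower_bound (E : Finset (V × V)) (J : V × V → ℝ) (h : V → ℝ)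
    (hJ : ∀ e, 0 ≤ J e) :
    gpart E J h / gpart E J (fun x => |h x|) ≥
      ∏ x : V, Real.exp (-2 * |min (h x) 0|) :=
  partition_ratio_lower_bound_general E J h
end
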